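/- arXiv:1206.0605 — 3 statements merged into one kernel-verified Lean document; each statement's English description precedes it below -/
import Mathlib

section
/- Let f : ℝ_+^N → ℝ^d be a function and t0 ∈ ℝ_+^N a point at which the local Hölder exponent satisfies α̃_f(t0) > 0. Then lim_{ρ→0} dim_H(Rg_f(B(t0,ρ))) ≤ lim_{ρ→0} dim_H(Gr_f(B(t0,ρ))) ≤ min{N/α̃_f(t0), N + d(1 − α̃_f(t0))}. -/
open MeasureTheory ProbabilityTheory Filter Set Metric
open scoped ENNReal NNReal Topology symmDiff

noncomputable section

variable {Ω : Type*} [MeasurableSpace Ω]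

/-- The ball of radius `ρ` around `t0`, taken within the domain `D`. -/
def ballIn {T : Type*} [PseudoMetricSpace T] (D : Set T) (t0 : T) (ρ : ℝ) : Set T :=
  D ∩ Metric.ball t0 ρ

/-- The incremental variance `E[|X_t - X_s|²]` of a real-valued process. -/
def incVar {T : Type*} (P : Measure Ω) (X : Ω → T → ℝ) (s t : T) : ℝ :=
  ∫ ω, (X ω t - X ω s) ^ 2 ∂P

/-- Deterministic local Hölder exponent at `t0` (within the domain `D`) of a process with
incremental variance `V`:
`sup {α > 0 : lim_{ρ→0} sup_{s,t ∈ B(t0,ρ)} V s t / dist s t ^ (2α) < ∞}`.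
Since the supremum is monotone in `ρ`, the finiteness of the limit is expressed as the
existence of some `ρ > 0` and a constant `C` bounding the ratio on `B(t0,ρ)`. -/
def detHolder {T : Type*} [PseudoMetricSpace T] (V : T → T → ℝ) (D : Set T) (t0 : T) : ℝ :=
  sSup {α : ℝ | 0 < α ∧ ∃ C : ℝ, ∃ ρ > (0:ℝ),
    ∀ s ∈ ballIn D t0 ρ, ∀ t ∈ ballIn D t0 ρ, V s t ≤ C * dist s t ^ (2 * α)}

/-- Deterministic local sub-exponent at `t0` (within the domain `D`) of a process with
incremental variance `V`:
`inf {α > 0 : lim_{ρ→0} inf_{s,t ∈ B(t0,ρ)} V s t / dist s t ^ (2α) = +∞}`.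
Since the infimum is monotone in `ρ`, the limit being `+∞` is expressed as: for every `M`
there is `ρ > 0` with `V s t ≥ M * dist s t ^ (2α)` on `B(t0,ρ)`. -/
def detSub {T : Type*} [PseudoMetricSpace T] (V : T → T → ℝ) (D : Set T) (t0 : T) : ℝ :=
  sInf {α : ℝ | 0 < α ∧ ∀ M : ℝ, ∃ ρ > (0:ℝ),
    ∀ s ∈ ballIn D t0 ρ, ∀ t ∈ ballIn D t0 ρ, M * dist s t ^ (2 * α) ≤ V s t}

/-- Pathwise local Hölder exponent of a function `f` at `t0`, within the domain `D`. -/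
def pathHolder {T F : Type*} [PseudoMetricSpace T] [NormedAddCommGroup F]
    (f : T → F) (D : Set T) (t0 : T) : ℝ :=
  sSup {α : ℝ | 0 < α ∧ ∃ C : ℝ, ∃ ρ > (0:ℝ),
    ∀ s ∈ ballIn D t0 ρ, ∀ t ∈ ballIn D t0 ρ, ‖f t - f s‖ ≤ C * dist s t ^ α}

/-- Pathwise local sub-exponent of a function `f` at `t0`, within the domain `D`. -/
def pathSub {T F : Type*} [PseudoMetricSpace T] [NormedAddCommGroup F]
    (f : T → F) (D : Set T) (t0 : T) : ℝ :=
  sInf {α : ℝ | 0 < α ∧ ∀ M : ℝ, ∃ ρ > (0:ℝ),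
    ∀ s ∈ ballIn D t0 ρ, ∀ t ∈ ballIn D t0 ρ, M * dist s t ^ α ≤ ‖f t - f s‖}

/-- A real-valued process indexed by `D ⊆ T` is Gaussian if every finite linear combination of
its values at points of `D` is a (possibly degenerate) Gaussian random variable. -/
def IsGaussianProcessOn {T : Type*} (P : Measure Ω) (D : Set T) (X : Ω → T → ℝ) : Prop :=
  ∀ (n : ℕ) (t : Fin n → T), (∀ k, t k ∈ D) → ∀ c : Fin n → ℝ,
    ∃ (m : ℝ) (σ : ℝ≥0), P.map (fun ω => ∑ k, c k * X ω (t k)) = gaussianReal m σ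

/-- The positive orthant `ℝ₊^N`. -/
def orth (N : ℕ) : Set (EuclideanSpace ℝ (Fin N)) := {t | ∀ i, 0 ≤ t i}

/-- A multiparameter Gaussian random field in `ℝ^d` indexed by `ℝ₊^N`: the coordinate
processes are Gaussian, independent, and identically distributed. -/
def IsGaussianField {N d : ℕ} (P : Measure Ω)
    (X : Ω → EuclideanSpace ℝ (Fin N) → EuclideanSpace ℝ (Fin d)) : Prop :=
  (∀ i : Fin d, IsGaussianProcessOn P (orth N) (fun ω t => X ω t i)) ∧
  iIndepFun (fun (i : Fin d) ω => fun t => X ω t i) P ∧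
  (∀ i j : Fin d, IdentDistrib (fun ω => fun t => X ω t i) (fun ω => fun t => X ω t j) P P)

/-- `lim_{ρ→0} dim_H (Gr_f(B(t0,ρ)))`; the limit exists by monotonicity and equals the
infimum over `ρ > 0`. -/
def limGrDim {T F : Type*} [MetricSpace T] [MetricSpace F]
    (f : T → F) (D : Set T) (t0 : T) : ℝ≥0∞ :=
  ⨅ (ρ : ℝ) (_ : 0 < ρ), dimH (Set.graphOn f (ballIn D t0 ρ))

/-- `lim_{ρ→0} dim_H (Rg_f(B(t0,ρ)))`; the limit exists by monotonicity and equals the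
infimum over `ρ > 0`. -/
def limRgDim {T F : Type*} [MetricSpace T] [MetricSpace F]
    (f : T → F) (D : Set T) (t0 : T) : ℝ≥0∞ :=
  ⨅ (ρ : ℝ) (_ : 0 < ρ), dimH (f '' ballIn D t0 ρ)

/-!
The range is the image of the graph under the projection `(t, x) ↦ x`, which is 1-Lipschitz.

For the graph, fix `0 < β < α̃_f(t0)`. Then `f` is `β`-Hölder on a small ball around `t0`, and
`β ≤ 1`: a Hölder exponent `> 1` on a convex set forces `f` to be locally constant, and then
every exponent is admissible, so the supremum defining `α̃_f(t0)` is (junk) `0`. Hence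
`t ↦ (t, f t)` is `β`-Hölder on the ball, which gives `dim_H ≤ N / β`. Covering the ball by
`≍ δ^(-N)` cubes of side `δ`, the graph over each cube has height `≲ δ^β` and is covered by
`≍ δ^((β - 1) d)` cubes of side `δ`; these `δ^(-(N + d (1 - β)))` sets of diameter `≲ δ` give
`dim_H ≤ N + d (1 - β)`. Finally let `β ↑ α̃_f(t0)`.
-/

theorem holderOnWith_of_norm_sub_le {T F : Type*} [PseudoMetricSpace T] [NormedAddCommGroup F]
    {f : T → F} {s : Set T} {C r : ℝ}
    (hr : 0 ≤ r) (H : ∀ x ∈ s, ∀ y ∈ s, ‖f y - f x‖ ≤ C * dist x y ^ r) :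
    HolderOnWith C.toNNReal r.toNNReal f s := by
  intro x hx y hy
  rw [edist_dist, edist_dist, Real.coe_toNNReal r hr, ENNReal.ofReal_rpow_of_nonneg dist_nonneg hr,
    ← ENNReal.ofReal.eq_def, ← ENNReal.ofReal_mul' (by positivity), dist_comm, dist_eq_norm]
  exact ENNReal.ofReal_le_ofReal (H x hx y hy)

theorem HolderOnWith.exists_of_le_of_isBounded {X Y : Type*} [PseudoMetricSpace X]
    [PseudoEMetricSpace Y] {f : X → Y} {C r t : ℝ≥0} {s : Set X} (hf : HolderOnWith C r f s)
    (hs : Bornology.IsBounded s) (htr : t ≤ r) : ∃ C', HolderOnWith C' t f s :=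
  ⟨_, hf.of_le (fun _ hx _ hy => (edist_le_ediam_of_mem hx hy).trans_eq
    (ENNReal.coe_toNNReal hs.ediam_ne_top).symm) htr⟩

theorem HolderOnWith.prodMk {X Y Z : Type*} [PseudoEMetricSpace X] [PseudoEMetricSpace Y]
    [PseudoEMetricSpace Z] {f : X → Y} {g : X → Z} {C₁ C₂ r : ℝ≥0} {s : Set X}
    (hf : HolderOnWith C₁ r f s) (hg : HolderOnWith C₂ r g s) :
    HolderOnWith (max C₁ C₂) r (fun x => (f x, g x)) s := fun x hx y hy => by
  rw [Prod.edist_eq]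
  exact max_le (hf.mono_const (le_max_left _ _) x hx y hy)
    (hg.mono_const (le_max_right _ _) x hx y hy)

theorem HolderOnWith.dimH_graphOn_le {X Y : Type*} [MetricSpace X] [EMetricSpace Y]
    {f : X → Y} {C r : ℝ≥0} {s : Set X} (hf : HolderOnWith C r f s) (h0 : 0 < r) (h1 : r ≤ 1)
    (hs : Bornology.IsBounded s) : dimH (graphOn f s) ≤ dimH s / r :=
  have ⟨_, hid⟩ := (holderWith_id.holderOnWith s).exists_of_le_of_isBounded hs h1
  (hid.prodMk hf).dimH_image_le h0

theorem eq_of_norm_sub_le_mul_dist_rpow_of_one_lt {T F : Type*} [NormedAddCommGroup T]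
    [NormedSpace ℝ T] [NormedAddCommGroup F] {f : T → F} {B : Set T} (hB : Convex ℝ B)
    {C α : ℝ} (hα : 1 < α) (H : ∀ s ∈ B, ∀ t ∈ B, ‖f t - f s‖ ≤ C * dist s t ^ α)
    {s t : T} (hs : s ∈ B) (ht : t ∈ B) : f t = f s := by
  set q : ℝ := 2 ^ (1 - α) with hq_def
  have hq_eq : q = 2 / 2 ^ α := by rw [hq_def, Real.rpow_sub zero_lt_two, Real.rpow_one]
  -- Bisecting `[s, t]` improves the bound by the factor `2 * 2 ^ (-α) = q < 1`.
  have hbisect : ∀ k : ℕ, ∀ s ∈ B, ∀ t ∈ B, ‖f t - f s‖ ≤ C * dist s t ^ α * q ^ k := by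
    intro k
    induction k with
    | zero => simpa using H
    | succ k ih =>
      intro s hs t ht
      set m := midpoint ℝ s t
      have hm : m ∈ B := hB.midpoint_mem hs ht
      have hsm : dist s m = dist s t / 2 := by
        rw [dist_left_midpoint]; simp [div_eq_inv_mul]
      have hmt : dist m t = dist s t / 2 := by
        rw [dist_midpoint_right]; simp [div_eq_inv_mul]
      calc ‖f t - f s‖ ≤ ‖f t - f m‖ + ‖f m - f s‖ := norm_sub_le_norm_sub_add_norm_sub _ _ _
        _ ≤ C * dist m t ^ α * q ^ k + C * dist s m ^ α * q ^ k :=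
          add_le_add (ih m hm t ht) (ih s hs m hm)
        _ = C * dist s t ^ α * q ^ (k + 1) := by
          rw [hsm, hmt, Real.div_rpow dist_nonneg zero_le_two, pow_succ, hq_eq]
          field_simp
          ring
  have hq : Tendsto (fun k : ℕ => C * dist s t ^ α * q ^ k) atTop (𝓝 0) := by
    simpa using (tendsto_pow_atTop_nhds_zero_of_lt_one (by positivity)
      (Real.rpow_lt_one_of_one_lt_of_neg one_lt_two (by linarith))).const_mul _
  exact sub_eq_zero.1 (norm_le_zero_iff.1 (ge_of_tendsto' hq fun k => hbisect k s hs t ht))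

theorem dimH_le_of_forall_cover {X : Type*} [EMetricSpace X] {E : Set X} {s c K : ℝ}
    (hs : 0 ≤ s) (hc : 0 ≤ c)
    (H : ∀ δ ∈ Ioc (0:ℝ) 1, ∃ (ι : Type) (_ : Fintype ι) (U : ι → Set X), E ⊆ ⋃ i, U i ∧
      (∀ i, ediam (U i) ≤ ENNReal.ofReal (c * δ)) ∧ Fintype.card ι * δ ^ s ≤ K) :
    dimH E ≤ ENNReal.ofReal s := by
  borelize X
  choose ι hι U hcover hdiam hcard using fun n : ℕ =>
    H (1 / (n + 1)) ⟨by positivity, div_le_one_of_le₀ (by simp) (by positivity)⟩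
  have hr : Tendsto (fun n : ℕ => ENNReal.ofReal (c * (1 / (n + 1)))) atTop (𝓝 0) := by
    simpa using ENNReal.tendsto_ofReal
      (tendsto_one_div_add_atTop_nhds_zero_nat.const_mul c)
  have hsum : ∀ n, ∑ i, ediam (U n i) ^ s ≤ ENNReal.ofReal (c ^ s * K) := fun n => calc
    ∑ i, ediam (U n i) ^ s ≤ ∑ _i : ι n, ENNReal.ofReal (c * (1 / (n + 1))) ^ s :=
        Finset.sum_le_sum fun i _ => ENNReal.rpow_le_rpow (hdiam n i) hs
    _ = ENNReal.ofReal (c ^ s * (Fintype.card (ι n) * (1 / (n + 1)) ^ s)) := by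
        rw [Finset.sum_const, Finset.card_univ, nsmul_eq_mul,
          ENNReal.ofReal_rpow_of_nonneg (by positivity) hs, ← ENNReal.ofReal_natCast,
          ← ENNReal.ofReal_mul (by positivity), Real.mul_rpow hc (by positivity)]
        ring_nf
    _ ≤ ENNReal.ofReal (c ^ s * K) :=
        ENNReal.ofReal_le_ofReal (mul_le_mul_of_nonneg_left (hcard n) (by positivity))
  have hμ : μH[s] E ≤ ENNReal.ofReal (c ^ s * K) :=
    (Measure.hausdorffMeasure_le_liminf_sum s E _ hr U (.of_forall hdiam) (.of_forall hcover)).trans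
      (liminf_le_of_frequently_le' (.of_forall hsum))
  refine dimH_le_of_hausdorffMeasure_ne_top ?_
  rw [Real.coe_toNNReal s hs]
  exact ne_top_of_le_ne_top ENNReal.ofReal_ne_top hμ

theorem exists_mem_Icc_of_sub_lt {a x δ : ℝ} {m : ℕ} (hδ : 0 < δ) (hax : a ≤ x)
    (hxm : x - a < m * δ) : ∃ k : Fin m, x ∈ Icc (a + k * δ) (a + (k + 1) * δ) := by
  have hy : 0 ≤ (x - a) / δ := div_nonneg (by linarith) hδ.le
  refine ⟨⟨⌊(x - a) / δ⌋₊, (Nat.floor_lt hy).2 ((div_lt_iff₀ hδ).2 hxm)⟩, ?_, ?_⟩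
  · have := (le_div_iff₀ hδ).1 (Nat.floor_le hy)
    simp only
    linarith
  · have := (div_lt_iff₀ hδ).1 (Nat.lt_floor_add_one ((x - a) / δ))
    simp only
    linarith

theorem EuclideanSpace.dist_le_sqrt_mul {n : ℕ} {x y : EuclideanSpace ℝ (Fin n)} {δ : ℝ}
    (hδ : 0 ≤ δ) (h : ∀ i, dist (x i) (y i) ≤ δ) : dist x y ≤ √n * δ := by
  rw [EuclideanSpace.dist_eq, ← Real.sqrt_sq hδ, ← Real.sqrt_mul (Nat.cast_nonneg n)]
  refine Real.sqrt_le_sqrt ?_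
  calc ∑ i, dist (x i) (y i) ^ 2 ≤ ∑ _i : Fin n, δ ^ 2 :=
        Finset.sum_le_sum fun i _ => pow_le_pow_left₀ dist_nonneg (h i) 2
    _ = n * δ ^ 2 := by simp

theorem EuclideanSpace.exists_cover_of_forall_dist_le {n : ℕ}
    {A : Set (EuclideanSpace ℝ (Fin n))} {h δ : ℝ} (hδ : 0 < δ)
    (hA : ∀ x ∈ A, ∀ y ∈ A, dist x y ≤ h) :
    ∃ U : (Fin n → Fin (⌈2 * h / δ⌉₊ + 1)) → Set (EuclideanSpace ℝ (Fin n)),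
      A ⊆ ⋃ k, U k ∧ ∀ k, ∀ x ∈ U k, ∀ y ∈ U k, dist x y ≤ √n * δ := by
  rcases A.eq_empty_or_nonempty with rfl | ⟨a, ha⟩
  · exact ⟨fun _ => ∅, empty_subset _, by simp⟩
  refine ⟨fun k => {u | ∀ i, u i ∈ Icc (a i - h + k i * δ) (a i - h + (k i + 1) * δ)}, ?_, ?_⟩
  · intro x hx
    have hm : 2 * h < ((⌈2 * h / δ⌉₊ + 1 : ℕ) : ℝ) * δ := by
      have := (div_le_iff₀ hδ).1 (Nat.le_ceil (2 * h / δ))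
      push_cast
      linarith
    have hcoord : ∀ i, ∃ k : Fin (⌈2 * h / δ⌉₊ + 1),
        x i ∈ Icc (a i - h + k * δ) (a i - h + (k + 1) * δ) := fun i => by
      have := (PiLp.dist_apply_le x a i).trans (hA x hx a ha)
      rw [Real.dist_eq, abs_le] at this
      exact exists_mem_Icc_of_sub_lt hδ (by linarith) (by linarith)
    choose k hk using hcoord
    exact mem_iUnion.2 ⟨k, hk⟩
  · intro k x hx y hy
    refine EuclideanSpace.dist_le_sqrt_mul hδ.le fun i => ?_
    rw [Real.dist_eq, abs_le]
    constructor <;> linarith [(hx i).1, (hx i).2, (hy i).1, (hy i).2]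

theorem natCeil_div_add_one_le {x a γ δ : ℝ} (hx : 0 ≤ x) (hxa : x ≤ a * δ ^ γ) (hγ : γ ≤ 1)
    (hδ0 : 0 < δ) (hδ1 : δ ≤ 1) : (⌈x / δ⌉₊ + 1 : ℝ) ≤ (a + 2) * δ ^ (γ - 1) := by
  have hceil := Nat.ceil_lt_add_one (div_nonneg hx hδ0.le)
  have hdiv : x / δ ≤ a * δ ^ (γ - 1) := by
    rw [Real.rpow_sub_one hδ0.ne', mul_div_assoc']
    exact div_le_div_of_nonneg_right hxa hδ0.le
  have hone : 1 ≤ δ ^ (γ - 1) := Real.one_le_rpow_of_pos_of_le_one_of_nonpos hδ0 hδ1 (by linarith)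
  linarith

theorem HolderOnWith.dimH_graphOn_le_add {N d : ℕ}
    {f : EuclideanSpace ℝ (Fin N) → EuclideanSpace ℝ (Fin d)} {C β : ℝ≥0}
    {B : Set (EuclideanSpace ℝ (Fin N))} (hf : HolderOnWith C β f B) (hβ : β ≤ 1)
    (hB : Bornology.IsBounded B) :
    dimH (graphOn f B) ≤ ENNReal.ofReal (N + d * (1 - β)) := by
  set R := Metric.diam B
  have hR : ∀ x ∈ B, ∀ y ∈ B, dist x y ≤ R := fun x hx y hy => dist_le_diam_of_mem hB hx hy
  have hβ_real : (β : ℝ) ≤ 1 := hβ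
  refine dimH_le_of_forall_cover (by nlinarith [β.2]) (c := √(N + d))
    (K := (2 * R + 2) ^ N * (2 * C * √N ^ (β : ℝ) + 2) ^ d) (by positivity) ?_
  rintro δ ⟨hδ0, hδ1⟩
  obtain ⟨U, hBU, hU⟩ := EuclideanSpace.exists_cover_of_forall_dist_le hδ0 hR
  set h : ℝ := C * (√N * δ) ^ (β : ℝ) with h_def
  have hfU : ∀ k, ∀ y ∈ f '' (B ∩ U k), ∀ y' ∈ f '' (B ∩ U k), dist y y' ≤ h := by
    rintro k _ ⟨x, hx, rfl⟩ _ ⟨x', hx', rfl⟩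
    exact (hf.dist_le hx.1 hx'.1).trans (by rw [h_def]; gcongr; exact hU k x hx.2 x' hx'.2)
  choose V hfV hV using fun k => EuclideanSpace.exists_cover_of_forall_dist_le hδ0 (hfU k)
  refine ⟨_ × _, inferInstance, fun kl => U kl.1 ×ˢ V kl.1 kl.2, ?_, ?_, ?_⟩
  · rintro _ ⟨x, hx, rfl⟩
    obtain ⟨k, hk⟩ := mem_iUnion.1 (hBU hx)
    obtain ⟨l, hl⟩ := mem_iUnion.1 (hfV k ⟨x, ⟨hx, hk⟩, rfl⟩)
    exact mem_iUnion.2 ⟨(k, l), hk, hl⟩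
  · rintro ⟨k, l⟩
    refine ediam_le fun p hp q hq => ?_
    rw [edist_dist, Prod.dist_eq]
    refine ENNReal.ofReal_le_ofReal (max_le ?_ ?_)
    · exact (hU k _ hp.1 _ hq.1).trans (by gcongr; simp)
    · exact (hV k l _ hp.2 _ hq.2).trans (by gcongr; simp)
  · have hm₁ : (⌈2 * R / δ⌉₊ + 1 : ℝ) ≤ (2 * R + 2) * δ ^ ((0:ℝ) - 1) :=
      natCeil_div_add_one_le (by positivity) (by simp) zero_le_one hδ0 hδ1
    have hm₂ : (⌈2 * h / δ⌉₊ + 1 : ℝ) ≤ (2 * C * √N ^ (β : ℝ) + 2) * δ ^ ((β : ℝ) - 1) :=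
      natCeil_div_add_one_le (by positivity)
        (le_of_eq (by rw [h_def, Real.mul_rpow (by positivity) hδ0.le]; ring)) hβ_real hδ0 hδ1
    calc (Fintype.card ((Fin N → Fin (⌈2 * R / δ⌉₊ + 1)) × (Fin d → Fin (⌈2 * h / δ⌉₊ + 1))) : ℝ)
          * δ ^ ((N : ℝ) + d * (1 - β))
        = (⌈2 * R / δ⌉₊ + 1 : ℝ) ^ N * (⌈2 * h / δ⌉₊ + 1 : ℝ) ^ d
          * δ ^ ((N : ℝ) + d * (1 - β)) := by
          simp [Fintype.card_prod]
      _ ≤ ((2 * R + 2) * δ ^ ((0:ℝ) - 1)) ^ N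
          * ((2 * C * √N ^ (β : ℝ) + 2) * δ ^ ((β : ℝ) - 1)) ^ d
          * δ ^ ((N : ℝ) + d * (1 - β)) := by gcongr
      _ = (2 * R + 2) ^ N * (2 * C * √N ^ (β : ℝ) + 2) ^ d
          * δ ^ (((0:ℝ) - 1) * N + ((β : ℝ) - 1) * d + ((N : ℝ) + d * (1 - β))) := by
          rw [Real.rpow_add hδ0 (((0:ℝ) - 1) * N + ((β : ℝ) - 1) * d),
            Real.rpow_add hδ0 (((0:ℝ) - 1) * N), Real.rpow_mul_natCast hδ0.le,
            Real.rpow_mul_natCast hδ0.le, mul_pow, mul_pow]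
          ring
      _ = (2 * R + 2) ^ N * (2 * C * √N ^ (β : ℝ) + 2) ^ d := by
          rw [show ((0:ℝ) - 1) * N + ((β : ℝ) - 1) * d + ((N : ℝ) + d * (1 - β)) = 0 by ring,
            Real.rpow_zero, mul_one]

section PathHolder

variable {T F : Type*} [NormedAddCommGroup F]

theorem nonempty_of_pos_pathHolder [PseudoMetricSpace T] {f : T → F} {D : Set T} {t0 : T}
    (hpos : 0 < pathHolder f D t0) :
    {α : ℝ | 0 < α ∧ ∃ C : ℝ, ∃ ρ > (0:ℝ),
      ∀ s ∈ ballIn D t0 ρ, ∀ t ∈ ballIn D t0 ρ, ‖f t - f s‖ ≤ C * dist s t ^ α}.Nonempty := by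
  rw [Set.nonempty_iff_ne_empty]
  rintro h
  simp [pathHolder, h] at hpos

theorem isBounded_ballIn [PseudoMetricSpace T] (D : Set T) (t0 : T) (ρ : ℝ) :
    Bornology.IsBounded (ballIn D t0 ρ) :=
  isBounded_ball.subset inter_subset_right

theorem exists_holderOnWith_of_lt_pathHolder [PseudoMetricSpace T] {f : T → F} {D : Set T}
    {t0 : T} {β : ℝ≥0} (hβ : β < pathHolder f D t0) :
    ∃ C : ℝ≥0, ∃ ρ > 0, HolderOnWith C β f (ballIn D t0 ρ) := by
  obtain ⟨α, ⟨hα, C, ρ, hρ, H⟩, hβα⟩ :=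
    exists_lt_of_lt_csSup (nonempty_of_pos_pathHolder (β.2.trans_lt hβ)) hβ
  obtain ⟨C', hC'⟩ := (holderOnWith_of_norm_sub_le hα.le H).exists_of_le_of_isBounded
    (isBounded_ballIn D t0 ρ) (Real.le_toNNReal_iff_coe_le hα.le |>.2 hβα.le)
  exact ⟨C', ρ, hρ, hC'⟩

theorem pathHolder_le_one [NormedAddCommGroup T] [NormedSpace ℝ T] {f : T → F} {D : Set T}
    {t0 : T} (hD : Convex ℝ D) (hpos : 0 < pathHolder f D t0) : pathHolder f D t0 ≤ 1 := by
  by_contra! h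
  obtain ⟨α, ⟨-, C, ρ, hρ, H⟩, hα⟩ := exists_lt_of_lt_csSup (nonempty_of_pos_pathHolder hpos) h
  have hconst : ∀ s ∈ ballIn D t0 ρ, ∀ t ∈ ballIn D t0 ρ, f t = f s := fun s hs t ht =>
    eq_of_norm_sub_le_mul_dist_rpow_of_one_lt (hD.inter (convex_ball t0 ρ)) hα H hs ht
  -- `f` is constant near `t0`, so every exponent is admissible and the supremum is junk `0`.
  have hunbdd : ¬BddAbove {α : ℝ | 0 < α ∧ ∃ C : ℝ, ∃ ρ > (0:ℝ),
      ∀ s ∈ ballIn D t0 ρ, ∀ t ∈ ballIn D t0 ρ, ‖f t - f s‖ ≤ C * dist s t ^ α} := by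
    refine not_bddAbove_iff.2 fun b => ⟨max b 0 + 1, ⟨by positivity, 0, ρ, hρ, ?_⟩, ?_⟩
    · intro s hs t ht
      simp [hconst s hs t ht]
    · linarith [le_max_left b 0]
  rw [pathHolder, Real.sSup_of_not_bddAbove hunbdd] at hpos
  exact hpos.false

end PathHolder

theorem convex_orth (N : ℕ) : Convex ℝ (orth N) := fun _ hs _ ht _ _ ha hb _ i =>
  add_nonneg (mul_nonneg ha (hs i)) (mul_nonneg hb (ht i))

theorem limGrDim_le_of_lt_pathHolder {N d : ℕ}
    {f : EuclideanSpace ℝ (Fin N) → EuclideanSpace ℝ (Fin d)} {t0 : EuclideanSpace ℝ (Fin N)}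
    {β : ℝ} (hβ0 : 0 < β) (hβ : β < pathHolder f (orth N) t0) :
    limGrDim f (orth N) t0 ≤ ENNReal.ofReal (N / β) ∧
      limGrDim f (orth N) t0 ≤ ENNReal.ofReal (N + d * (1 - β)) := by
  have hβ1 : β ≤ 1 := hβ.le.trans (pathHolder_le_one (convex_orth N) (hβ0.trans hβ))
  obtain ⟨C, ρ, hρ, hf⟩ := exists_holderOnWith_of_lt_pathHolder (β := β.toNNReal)
    (by rwa [Real.coe_toNNReal _ hβ0.le])
  have hlim : limGrDim f (orth N) t0 ≤ dimH (graphOn f (ballIn (orth N) t0 ρ)) :=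
    iInf₂_le ρ hρ
  have hβ1' : β.toNNReal ≤ 1 := Real.toNNReal_le_one.2 hβ1
  refine ⟨hlim.trans ?_, hlim.trans ?_⟩
  · calc dimH (graphOn f (ballIn (orth N) t0 ρ))
        ≤ dimH (ballIn (orth N) t0 ρ) / β.toNNReal :=
          hf.dimH_graphOn_le (Real.toNNReal_pos.2 hβ0) hβ1' (isBounded_ballIn _ _ _)
      _ ≤ dimH (univ : Set (EuclideanSpace ℝ (Fin N))) / β.toNNReal := by
          gcongr; exact subset_univ _
      _ = ENNReal.ofReal (N / β) := by
          rw [Real.dimH_univ_eq_finrank, finrank_euclideanSpace_fin,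
            ENNReal.ofReal_div_of_pos hβ0, ENNReal.ofReal_natCast]
          rfl
  · simpa [Real.coe_toNNReal _ hβ0.le] using
      hf.dimH_graphOn_le_add hβ1' (isBounded_ballIn _ _ _)

theorem statement4_general {N d : ℕ}
    (f : EuclideanSpace ℝ (Fin N) → EuclideanSpace ℝ (Fin d))
    (t0 : EuclideanSpace ℝ (Fin N))
    (hpos : 0 < pathHolder f (orth N) t0) :
    limRgDim f (orth N) t0 ≤ limGrDim f (orth N) t0 ∧
    limGrDim f (orth N) t0 ≤
      min (ENNReal.ofReal (N / pathHolder f (orth N) t0))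
        (ENNReal.ofReal (N + d * (1 - pathHolder f (orth N) t0))) := by
  refine ⟨iInf₂_mono fun ρ _ => ?_, ?_⟩
  · rw [← Set.image_snd_graphOn]
    exact LipschitzWith.prod_snd.dimH_image_le _
  set α := pathHolder f (orth N) t0
  have hα : α ∈ closure (Ioo 0 α) := by
    rw [closure_Ioo hpos.ne]
    exact right_mem_Icc.2 hpos.le
  refine le_min (ContinuousWithinAt.closure_le hα continuousWithinAt_const ?_
    fun β hβ => (limGrDim_le_of_lt_pathHolder hβ.1 hβ.2).1)
    (ContinuousWithinAt.closure_le hα continuousWithinAt_const ?_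
    fun β hβ => (limGrDim_le_of_lt_pathHolder hβ.1 hβ.2).2)
  · exact ENNReal.continuous_ofReal.continuousAt.comp_continuousWithinAt
      (by fun_prop (disch := exact hpos.ne'))
  · exact ENNReal.continuous_ofReal.continuousAt.comp_continuousWithinAt (by fun_prop)

/-- Lemma 2.5: upper bound of the local Hausdorff dimensions of the range and the graph of a
function in terms of its local Hölder exponent. -/
theorem statement4 {N d : ℕ} (hN : 0 < N) (hd : 0 < d)
    (f : EuclideanSpace ℝ (Fin N) → EuclideanSpace ℝ (Fin d))
    (t0 : EuclideanSpace ℝ (Fin N)) (ht0 : t0 ∈ orth N)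
    (hpos : 0 < pathHolder f (orth N) t0) :
    limRgDim f (orth N) t0 ≤ limGrDim f (orth N) t0 ∧
    limGrDim f (orth N) t0 ≤
      min (ENNReal.ofReal (N / pathHolder f (orth N) t0))
        (ENNReal.ofReal (N + d * (1 - pathHolder f (orth N) t0))) :=
  statement4_general f t0 hpos

end
end

section
/- Let m be the Lebesgue measure on ℝ^N and let a ≺ b in ℝ_+^N∖{0} with all coordinates of a strictly positive. Then there exist constants m_{a,b} > 0 and M_{a,b} > 0 such that for all s, t ∈ [a,b] = ∏_{i=1}^N [a_i, b_i]: m_{a,b} · ‖t−s‖_1 ≤ m([0,s] △ [0,t]) ≤ M_{a,b} · ‖t−s‖_∞, where ‖x‖_1 = Σ_{i=1}^N |x_i| and ‖x‖_∞ = max_{1≤i≤N} |x_i|. -/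
/-!
The boxes `[0,s]` and `[0,t]` meet in `[0,g]` with `gᵢ = min sᵢ tᵢ`, so
`m([0,s] △ [0,t]) = (∏ sᵢ - ∏ gᵢ) + (∏ tᵢ - ∏ gᵢ)`. Peeling off one coordinate at a time,
`∏ fᵢ - ∏ gᵢ` lies between `A ^ N` and `B ^ N` times `∑ (fᵢ - gᵢ)` whenever all coordinates lie
in `[A, B]` with `A ≤ 1 ≤ B`, and `∑ (sᵢ - gᵢ) + ∑ (tᵢ - gᵢ) = ‖t - s‖₁ ≤ N ‖t - s‖_∞`.
-/

open MeasureTheory ProbabilityTheory Filter Set Metric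
open scoped ENNReal NNReal Topology symmDiff

noncomputable section

variable {Ω : Type*} [MeasurableSpace Ω]

/-- The rectangle `[0,s] = ∏ᵢ [0, sᵢ]`. -/
def box {N : ℕ} (s : EuclideanSpace ℝ (Fin N)) : Set (EuclideanSpace ℝ (Fin N)) :=
  {x | ∀ i, 0 ≤ x i ∧ x i ≤ s i}

namespace Finset

variable {ι R : Type*} [DecidableEq ι] [CommRing R] {s : Finset ι} {f g : ι → R}

lemma prod_insert_sub_prod_insert {i : ι} (hi : i ∉ s) :
    ∏ j ∈ insert i s, f j - ∏ j ∈ insert i s, g j =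
      (f i - g i) * ∏ j ∈ s, f j + g i * (∏ j ∈ s, f j - ∏ j ∈ s, g j) := by
  rw [prod_insert hi, prod_insert hi]
  ring

variable [PartialOrder R] [IsOrderedRing R]

lemma prod_sub_prod_le_sum_sub_mul_pow {B : R} (hB : 1 ≤ B)
    (h : ∀ i ∈ s, 0 ≤ g i ∧ g i ≤ f i ∧ f i ≤ B) :
    ∏ i ∈ s, f i - ∏ i ∈ s, g i ≤ (∑ i ∈ s, (f i - g i)) * B ^ #s := by
  induction s using Finset.induction with
  | empty => simp
  | @insert i s hi ih =>
    obtain ⟨hgi, hgfi, hfBi⟩ := h i (mem_insert_self i s)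
    have h' : ∀ j ∈ s, 0 ≤ g j ∧ g j ≤ f j ∧ f j ≤ B := fun j hj => h j (mem_insert_of_mem hj)
    have hprod_f : ∏ j ∈ s, f j ≤ B ^ (#s + 1) :=
      calc ∏ j ∈ s, f j ≤ B ^ #s :=
            (prod_le_prod (fun j hj => (h' j hj).1.trans (h' j hj).2.1)
              fun j hj => (h' j hj).2.2).trans_eq (prod_const B)
        _ ≤ B ^ (#s + 1) := pow_le_pow_right₀ hB (Nat.le_succ _)
    have hprod_g : ∏ j ∈ s, g j ≤ ∏ j ∈ s, f j :=
      prod_le_prod (fun j hj => (h' j hj).1) fun j hj => (h' j hj).2.1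
    rw [prod_insert_sub_prod_insert hi, sum_insert hi, card_insert_of_notMem hi, add_mul]
    refine add_le_add (mul_le_mul_of_nonneg_left hprod_f (sub_nonneg.2 hgfi)) ?_
    calc g i * (∏ j ∈ s, f j - ∏ j ∈ s, g j)
        ≤ B * ((∑ j ∈ s, (f j - g j)) * B ^ #s) :=
          mul_le_mul (hgfi.trans hfBi) (ih h') (sub_nonneg.2 hprod_g) (zero_le_one.trans hB)
      _ = (∑ j ∈ s, (f j - g j)) * B ^ (#s + 1) := by ring

lemma sum_sub_mul_pow_le_prod_sub_prod {A : R} (hA0 : 0 ≤ A) (hA1 : A ≤ 1)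
    (h : ∀ i ∈ s, A ≤ g i ∧ g i ≤ f i) :
    (∑ i ∈ s, (f i - g i)) * A ^ #s ≤ ∏ i ∈ s, f i - ∏ i ∈ s, g i := by
  induction s using Finset.induction with
  | empty => simp
  | @insert i s hi ih =>
    obtain ⟨hAgi, hgfi⟩ := h i (mem_insert_self i s)
    have h' : ∀ j ∈ s, A ≤ g j ∧ g j ≤ f j := fun j hj => h j (mem_insert_of_mem hj)
    have hprod_f : A ^ (#s + 1) ≤ ∏ j ∈ s, f j :=
      calc A ^ (#s + 1) ≤ A ^ #s := pow_le_pow_of_le_one hA0 hA1 (Nat.le_succ _)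
        _ ≤ ∏ j ∈ s, f j :=
            (prod_const A).symm.trans_le
              (prod_le_prod (fun _ _ => hA0) fun j hj => (h' j hj).1.trans (h' j hj).2)
    have hprod_g : ∏ j ∈ s, g j ≤ ∏ j ∈ s, f j :=
      prod_le_prod (fun j hj => hA0.trans (h' j hj).1) fun j hj => (h' j hj).2
    rw [prod_insert_sub_prod_insert hi, sum_insert hi, card_insert_of_notMem hi, add_mul]
    refine add_le_add (mul_le_mul_of_nonneg_left hprod_f (sub_nonneg.2 hgfi)) ?_
    calc (∑ j ∈ s, (f j - g j)) * A ^ (#s + 1)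
        = A * ((∑ j ∈ s, (f j - g j)) * A ^ #s) := by ring
      _ ≤ g i * (∏ j ∈ s, f j - ∏ j ∈ s, g j) :=
          mul_le_mul hAgi (ih h') (mul_nonneg (sum_nonneg fun j hj => sub_nonneg.2 (h' j hj).2)
            (pow_nonneg hA0 _)) (hA0.trans hAgi)

end Finset

section MinProduct

variable {ι : Type*} [Fintype ι] {s t : ι → ℝ}

lemma sum_sub_min_add_sum_sub_min (s t : ι → ℝ) :
    ∑ i, (s i - min (s i) (t i)) + ∑ i, (t i - min (s i) (t i)) = ∑ i, |t i - s i| := by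
  rw [← Finset.sum_add_distrib]
  refine Finset.sum_congr rfl fun i _ => ?_
  linarith [max_sub_min_eq_abs (s i) (t i), min_add_max (s i) (t i)]

lemma sum_abs_sub_mul_pow_le_prod_sub_prod_min {A : ℝ} (hA0 : 0 ≤ A) (hA1 : A ≤ 1)
    (hs : ∀ i, A ≤ s i) (ht : ∀ i, A ≤ t i) :
    (∑ i, |t i - s i|) * A ^ Fintype.card ι ≤
      (∏ i, s i - ∏ i, min (s i) (t i)) + (∏ i, t i - ∏ i, min (s i) (t i)) := by
  classical
  rw [← sum_sub_min_add_sum_sub_min, add_mul]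
  exact add_le_add
    (Finset.sum_sub_mul_pow_le_prod_sub_prod hA0 hA1 fun i _ =>
      ⟨le_min (hs i) (ht i), min_le_left _ _⟩)
    (Finset.sum_sub_mul_pow_le_prod_sub_prod hA0 hA1 fun i _ =>
      ⟨le_min (hs i) (ht i), min_le_right _ _⟩)

lemma prod_sub_prod_min_le_sum_abs_sub_mul_pow {B : ℝ} (hB : 1 ≤ B)
    (hs : ∀ i, 0 ≤ s i ∧ s i ≤ B) (ht : ∀ i, 0 ≤ t i ∧ t i ≤ B) :
    (∏ i, s i - ∏ i, min (s i) (t i)) + (∏ i, t i - ∏ i, min (s i) (t i)) ≤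
      (∑ i, |t i - s i|) * B ^ Fintype.card ι := by
  classical
  rw [← sum_sub_min_add_sum_sub_min, add_mul]
  exact add_le_add
    (Finset.prod_sub_prod_le_sum_sub_mul_pow hB fun i _ =>
      ⟨le_min (hs i).1 (ht i).1, min_le_left _ _, (hs i).2⟩)
    (Finset.prod_sub_prod_le_sum_sub_mul_pow hB fun i _ =>
      ⟨le_min (hs i).1 (ht i).1, min_le_right _ _, (ht i).2⟩)

end MinProduct

lemma exists_pos_le_one_forall_le {ι : Type*} [Finite ι] {a : ι → ℝ} (ha : ∀ i, 0 < a i) :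
    ∃ A : ℝ, 0 < A ∧ A ≤ 1 ∧ ∀ i, A ≤ a i := by
  obtain ⟨C, hC⟩ := (Set.finite_range fun i => (a i)⁻¹).bddAbove
  refine ⟨(max 1 C)⁻¹, by positivity, inv_le_one_of_one_le₀ (le_max_left _ _), fun i => ?_⟩
  exact inv_le_of_inv_le₀ (ha i) ((hC ⟨i, rfl⟩).trans (le_max_right _ _))

lemma exists_one_le_forall_le {ι : Type*} [Finite ι] (b : ι → ℝ) :
    ∃ B : ℝ, 1 ≤ B ∧ ∀ i, b i ≤ B := by
  obtain ⟨C, hC⟩ := (Set.finite_range b).bddAbove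
  exact ⟨max 1 C, le_max_left _ _, fun i => (hC ⟨i, rfl⟩).trans (le_max_right _ _)⟩

section Box

variable {N : ℕ}

lemma box_eq_preimage_pi (s : EuclideanSpace ℝ (Fin N)) :
    box s = (MeasurableEquiv.toLp 2 (Fin N → ℝ)).symm ⁻¹' univ.pi fun i => Icc 0 (s i) := by
  ext x
  exact ⟨fun h i _ => h i, fun h i => h i (mem_univ i)⟩

lemma measurableSet_box (s : EuclideanSpace ℝ (Fin N)) : MeasurableSet (box s) := by
  rw [box_eq_preimage_pi]
  exact (MeasurableEquiv.measurable _) (.univ_pi fun _ => measurableSet_Icc)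

lemma volume_box {s : EuclideanSpace ℝ (Fin N)} (hs : ∀ i, 0 ≤ s i) :
    volume (box s) = ENNReal.ofReal (∏ i, s i) := by
  rw [box_eq_preimage_pi,
    (EuclideanSpace.volume_preserving_symm_measurableEquiv_toLp (Fin N)).measure_preimage
      (MeasurableSet.univ_pi fun _ => measurableSet_Icc).nullMeasurableSet,
    volume_pi_pi, ENNReal.ofReal_prod_of_nonneg fun i _ => hs i]
  simp only [Real.volume_Icc, sub_zero]

lemma box_inter_box (s t : EuclideanSpace ℝ (Fin N)) :
    box s ∩ box t = box (WithLp.toLp 2 fun i => min (s i) (t i)) := by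
  ext x
  simp only [box, mem_inter_iff, mem_ofPred_eq, le_min_iff]
  exact ⟨fun ⟨hs, ht⟩ i => ⟨(hs i).1, (hs i).2, (ht i).2⟩,
    fun h => ⟨fun i => ⟨(h i).1, (h i).2.1⟩, fun i => ⟨(h i).1, (h i).2.2⟩⟩⟩

lemma volume_box_sdiff_box {s t : EuclideanSpace ℝ (Fin N)} (hs : ∀ i, 0 ≤ s i)
    (ht : ∀ i, 0 ≤ t i) :
    volume (box s \ box t) = ENNReal.ofReal (∏ i, s i - ∏ i, min (s i) (t i)) := by
  have hmin : ∀ i, 0 ≤ min (s i) (t i) := fun i => le_min (hs i) (ht i)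
  rw [← sdiff_self_inter, box_inter_box, measure_sdiff (box_inter_box s t ▸ inter_subset_left)
      (measurableSet_box _).nullMeasurableSet
      (by rw [volume_box hmin]; exact ENNReal.ofReal_ne_top),
    volume_box hs, volume_box hmin, ENNReal.ofReal_sub _ (Finset.prod_nonneg fun i _ => hmin i)]

lemma volume_box_symmDiff_box {s t : EuclideanSpace ℝ (Fin N)} (hs : ∀ i, 0 ≤ s i)
    (ht : ∀ i, 0 ≤ t i) :
    volume (box s ∆ box t) =
      ENNReal.ofReal ((∏ i, s i - ∏ i, min (s i) (t i)) + (∏ i, t i - ∏ i, min (s i) (t i))) := by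
  have hmin : ∀ i, 0 ≤ min (s i) (t i) := fun i => le_min (hs i) (ht i)
  rw [measure_symmDiff_eq (measurableSet_box s).nullMeasurableSet
      (measurableSet_box t).nullMeasurableSet, volume_box_sdiff_box hs ht,
    volume_box_sdiff_box ht hs]
  simp_rw [min_comm (t _)]
  rw [ENNReal.ofReal_add]
  · exact sub_nonneg.2 (Finset.prod_le_prod (fun i _ => hmin i) fun i _ => min_le_left _ _)
  · exact sub_nonneg.2 (Finset.prod_le_prod (fun i _ => hmin i) fun i _ => min_le_right _ _)

end Box

theorem statement10_general {N : ℕ} (hN : 0 < N) (a b : EuclideanSpace ℝ (Fin N))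
    (ha : ∀ i, 0 < a i) :
    ∃ m M : ℝ, 0 < m ∧ 0 < M ∧
      ∀ s t : EuclideanSpace ℝ (Fin N),
        (∀ i, a i ≤ s i ∧ s i ≤ b i) → (∀ i, a i ≤ t i ∧ t i ≤ b i) →
        ENNReal.ofReal (m * ∑ i, |t i - s i|) ≤ volume (box s ∆ box t) ∧
        volume (box s ∆ box t) ≤ ENNReal.ofReal (M * ⨆ i, |t i - s i|) := by
  obtain ⟨A, hA0, hA1, hAa⟩ := exists_pos_le_one_forall_le ha
  obtain ⟨B, hB1, hbB⟩ := exists_one_le_forall_le b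
  refine ⟨A ^ N, N * B ^ N, by positivity, by positivity, fun s t hs ht => ?_⟩
  have hsA : ∀ i, A ≤ s i := fun i => (hAa i).trans (hs i).1
  have htA : ∀ i, A ≤ t i := fun i => (hAa i).trans (ht i).1
  have hsB : ∀ i, 0 ≤ s i ∧ s i ≤ B := fun i => ⟨hA0.le.trans (hsA i), (hs i).2.trans (hbB i)⟩
  have htB : ∀ i, 0 ≤ t i ∧ t i ≤ B := fun i => ⟨hA0.le.trans (htA i), (ht i).2.trans (hbB i)⟩
  have hsum_le_sup : ∑ i, |t i - s i| ≤ N * ⨆ i, |t i - s i| := by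
    simpa using Finset.sum_le_card_nsmul Finset.univ (fun i => |t i - s i|) _
      fun i _ => le_ciSup (f := fun i => |t i - s i|) (Set.finite_range _).bddAbove i
  rw [volume_box_symmDiff_box (fun i => (hsB i).1) fun i => (htB i).1]
  refine ⟨ENNReal.ofReal_le_ofReal ?_, ENNReal.ofReal_le_ofReal ?_⟩
  · simpa [mul_comm] using sum_abs_sub_mul_pow_le_prod_sub_prod_min hA0.le hA1 hsA htA
  · calc _ ≤ (∑ i, |t i - s i|) * B ^ N := by
          simpa using prod_sub_prod_min_le_sum_abs_sub_mul_pow hB1 hsB htB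
      _ ≤ N * B ^ N * ⨆ i, |t i - s i| := by
          rw [mul_right_comm]; gcongr

/-- Lemma 3.1: for `s, t` in a box `[a,b]` with positive coordinates,
`m_{a,b} ‖t−s‖₁ ≤ m([0,s] ∆ [0,t]) ≤ M_{a,b} ‖t−s‖_∞` where `m` is the Lebesgue measure. -/
theorem statement10 {N : ℕ} (hN : 0 < N) (a b : EuclideanSpace ℝ (Fin N))
    (ha : ∀ i, 0 < a i) (hab : ∀ i, a i < b i) :
    ∃ m M : ℝ, 0 < m ∧ 0 < M ∧
      ∀ s t : EuclideanSpace ℝ (Fin N),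
        (∀ i, a i ≤ s i ∧ s i ≤ b i) → (∀ i, a i ≤ t i ∧ t i ≤ b i) →
        ENNReal.ofReal (m * ∑ i, |t i - s i|) ≤ volume (box s ∆ box t) ∧
        volume (box s ∆ box t) ≤ ENNReal.ofReal (M * ⨆ i, |t i - s i|) :=
  statement10_general hN a b ha

end
end

section
/- Let B^H = {B^H_t ; t ∈ ℝ_+^N} be a multiparameter fractional Brownian motion of index H ∈ (0, 1/2] with m the Lebesgue measure. Then at every t0 ∈ ℝ_+^N with strictly positive coordinates, the deterministic local Hölder exponent and the deterministic local sub-exponent of B^H both equal H: 𝔞̃_{B^H}(t0) = 𝔞_{B^H}(t0) = H. -/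
/-!
By the covariance formula, the incremental variance of `B^H` is `λ([0,s] ∆ [0,t])^{2H}`. Near a
point with positive coordinates this Lebesgue measure is comparable to `‖s - t‖` from both sides:
`[0,s] ∆ [0,t]` contains, for each `i`, a slab of width `|s_i - t_i|` whose cross-section is bounded
below, and it is covered by `N` slabs of width at most `‖s - t‖` and bounded cross-section. So the
incremental variance is comparable to `‖s - t‖^{2H}` on small balls around `t0`, and since `t0`
is an accumulation point of the orthant, this pins both exponents to `H`.
-/

open MeasureTheory ProbabilityTheory Filter Set Metric
open scoped ENNReal NNReal Topology symmDiff

noncomputable section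

variable {Ω : Type*} [MeasurableSpace Ω]

/-- A multiparameter fractional Brownian motion of index `H` (with `m` the Lebesgue measure):
a centered Gaussian process on `ℝ₊^N` with covariance
`E[B_s B_t] = ½ (m([0,s])^{2H} + m([0,t])^{2H} − m([0,s] ∆ [0,t])^{2H})`. -/
def IsMpfBm {Ω : Type*} [MeasurableSpace Ω] {N : ℕ} (P : MeasureTheory.Measure Ω) (H : ℝ)
    (B : Ω → EuclideanSpace ℝ (Fin N) → ℝ) : Prop :=
  IsGaussianProcessOn P (orth N) B ∧
  (∀ t ∈ orth N, ∫ ω, B ω t ∂P = 0) ∧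
  (∀ t ∈ orth N, MeasureTheory.MemLp (fun ω => B ω t) 2 P) ∧
  (∀ s ∈ orth N, ∀ t ∈ orth N,
    ∫ ω, B ω s * B ω t ∂P =
      (1/2) * ((MeasureTheory.volume (box s)).toReal ^ (2*H)
        + (MeasureTheory.volume (box t)).toReal ^ (2*H)
        - (MeasureTheory.volume (box s ∆ box t)).toReal ^ (2*H)))

lemma ballIn_mono {T : Type*} [PseudoMetricSpace T] {D : Set T} {t0 : T} {ρ ρ' : ℝ}
    (h : ρ ≤ ρ') : ballIn D t0 ρ ⊆ ballIn D t0 ρ' :=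
  inter_subset_inter_right D (ball_subset_ball h)

lemma dist_lt_of_mem_ballIn {T : Type*} [PseudoMetricSpace T] {D : Set T} {t0 s t : T}
    {ρ : ℝ} (hs : s ∈ ballIn D t0 ρ) (ht : t ∈ ballIn D t0 ρ) : dist s t < 2 * ρ := by
  have := dist_triangle_right s t t0
  linarith [mem_ball.1 hs.2, mem_ball.1 ht.2]

section PowerComparison

lemma tendsto_const_mul_rpow_nhds_zero (M : ℝ) {e : ℝ} (he : 0 < e) :
    Tendsto (fun d : ℝ => M * d ^ e) (𝓝 0) (𝓝 0) := by
  simpa [Real.zero_rpow he.ne'] using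
    (Real.continuousAt_rpow_const 0 e (Or.inr he.le)).tendsto.const_mul M

lemma le_of_frequently_mul_rpow_le {a b c C : ℝ} (hc : 0 < c)
    (h : ∃ᶠ d in 𝓝[>] (0 : ℝ), c * d ^ a ≤ C * d ^ b) : b ≤ a := by
  by_contra! hab
  have hlim := (tendsto_const_mul_rpow_nhds_zero C (sub_pos.2 hab)).mono_left
    (nhdsWithin_le_nhds (s := Ioi 0))
  obtain ⟨d, hle, hlt, hd⟩ :=
    (h.and_eventually ((hlim.eventually (gt_mem_nhds hc)).and self_mem_nhdsWithin)).exists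
  refine lt_irrefl (c * d ^ a) ?_
  calc c * d ^ a ≤ C * d ^ b := hle
    _ = C * d ^ (b - a) * d ^ a := by rw [mul_assoc, ← Real.rpow_add hd, sub_add_cancel]
    _ < c * d ^ a := mul_lt_mul_of_pos_right hlt (Real.rpow_pos_of_pos hd a)

lemma eventually_mul_rpow_le {a b c : ℝ} (M : ℝ) (hc : 0 < c) (ha : 0 ≤ a) (hab : a < b) :
    ∀ᶠ d in 𝓝[≥] (0 : ℝ), M * d ^ b ≤ c * d ^ a := by
  have hlim := (tendsto_const_mul_rpow_nhds_zero M (sub_pos.2 hab)).mono_left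
    (nhdsWithin_le_nhds (s := Ici 0))
  filter_upwards [hlim.eventually (gt_mem_nhds hc), self_mem_nhdsWithin] with d hlt hd
  rw [← sub_add_cancel b a, Real.rpow_add' hd (by linarith), ← mul_assoc]
  exact mul_le_mul_of_nonneg_right hlt.le (Real.rpow_nonneg hd a)

end PowerComparison

section LocalExponents

variable {T : Type*} [MetricSpace T] {V : T → T → ℝ} {D : Set T} {t0 : T}

lemma frequently_of_forall_mem_ballIn (ht0 : t0 ∈ D) (hacc : t0 ∈ closure (D \ {t0}))
    {ρ : ℝ} (hρ : 0 < ρ) {p : ℝ → Prop}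
    (h : ∀ s ∈ ballIn D t0 ρ, ∀ t ∈ ballIn D t0 ρ, p (dist s t)) :
    ∃ᶠ d in 𝓝[>] (0 : ℝ), p d := by
  rw [(nhdsGT_basis (0 : ℝ)).frequently_iff]
  intro ε hε
  obtain ⟨q, ⟨hqD, hqt⟩, hq⟩ := Metric.mem_closure_iff.1 hacc (min ε ρ) (lt_min hε hρ)
  refine ⟨dist t0 q, ⟨dist_pos.2 (Ne.symm hqt), hq.trans_le (min_le_left _ _)⟩,
    h t0 ⟨ht0, mem_ball_self hρ⟩ q ⟨hqD, ?_⟩⟩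
  rw [mem_ball, dist_comm]
  exact hq.trans_le (min_le_right _ _)

variable {H c C ρ : ℝ} (hH : 0 < H) (ht0 : t0 ∈ D) (hacc : t0 ∈ closure (D \ {t0}))
  (hc : 0 < c) (hρ : 0 < ρ)
  (hlow : ∀ s ∈ ballIn D t0 ρ, ∀ t ∈ ballIn D t0 ρ, c * dist s t ^ (2 * H) ≤ V s t)
  (hup : ∀ s ∈ ballIn D t0 ρ, ∀ t ∈ ballIn D t0 ρ, V s t ≤ C * dist s t ^ (2 * H))
include hH ht0 hacc hc hρ hlow hup

lemma detHolder_eq_of_bounds : detHolder V D t0 = H := by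
  refine IsGreatest.csSup_eq ⟨⟨hH, C, ρ, hρ, hup⟩, ?_⟩
  rintro α ⟨-, C', ρ', hρ', hC'⟩
  have key : ∃ᶠ d in 𝓝[>] (0 : ℝ), c * d ^ (2 * H) ≤ C' * d ^ (2 * α) :=
    frequently_of_forall_mem_ballIn ht0 hacc (lt_min hρ hρ') fun s hs t ht =>
      (hlow s (ballIn_mono (min_le_left _ _) hs) t (ballIn_mono (min_le_left _ _) ht)).trans
        (hC' s (ballIn_mono (min_le_right _ _) hs) t (ballIn_mono (min_le_right _ _) ht))
  linarith [le_of_frequently_mul_rpow_le hc key]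

lemma detSub_eq_of_bounds : detSub V D t0 = H := by
  have hmem : ∀ α, H < α → α ∈ {α : ℝ | 0 < α ∧ ∀ M : ℝ, ∃ ρ > (0:ℝ),
      ∀ s ∈ ballIn D t0 ρ, ∀ t ∈ ballIn D t0 ρ, M * dist s t ^ (2 * α) ≤ V s t} := by
    intro α hα
    refine ⟨hH.trans hα, fun M => ?_⟩
    obtain ⟨δ, hδ, hsmall⟩ := Metric.eventually_nhds_iff.1 (eventually_nhdsWithin_iff.1
      (eventually_mul_rpow_le M hc (by linarith : (0 : ℝ) ≤ 2 * H) (by linarith : 2 * H < 2 * α)))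
    refine ⟨min ρ (δ / 2), lt_min hρ (half_pos hδ), fun s hs t ht => ?_⟩
    have hst : dist s t < δ := by
      linarith [dist_lt_of_mem_ballIn hs ht, min_le_right ρ (δ / 2)]
    refine (hsmall (by rwa [Real.dist_0_eq_abs, abs_dist]) dist_nonneg).trans ?_
    exact hlow s (ballIn_mono (min_le_left _ _) hs) t (ballIn_mono (min_le_left _ _) ht)
  refine csInf_eq_of_forall_ge_of_forall_gt_exists_lt ⟨H + 1, hmem _ (lt_add_one H)⟩ ?_
    fun w hw => ⟨(H + w) / 2, hmem _ (by linarith), by linarith⟩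
  rintro α ⟨-, hM⟩
  obtain ⟨ρ', hρ', hρ'M⟩ := hM 1
  have key : ∃ᶠ d in 𝓝[>] (0 : ℝ), 1 * d ^ (2 * α) ≤ C * d ^ (2 * H) :=
    frequently_of_forall_mem_ballIn ht0 hacc (lt_min hρ hρ') fun s hs t ht =>
      (hρ'M s (ballIn_mono (min_le_right _ _) hs) t (ballIn_mono (min_le_right _ _) ht)).trans
        (hup s (ballIn_mono (min_le_left _ _) hs) t (ballIn_mono (min_le_left _ _) ht))
  linarith [le_of_frequently_mul_rpow_le one_pos key]

end LocalExponents

section Boxes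

variable {N : ℕ}

def slab (i : Fin N) (I J : Set ℝ) : Set (EuclideanSpace ℝ (Fin N)) :=
  {x | ∀ j, x j ∈ Function.update (fun _ => J) i I j}

lemma mem_slab {x : EuclideanSpace ℝ (Fin N)} {i : Fin N} {I J : Set ℝ} :
    x ∈ slab i I J ↔ x i ∈ I ∧ ∀ j ≠ i, x j ∈ J := by
  refine ⟨fun h => ⟨by simpa using h i, fun j hj => by simpa [hj] using h j⟩, ?_⟩
  rintro ⟨hi, hJ⟩ j
  rcases eq_or_ne j i with rfl | hj
  · simpa using hi
  · simpa [hj] using hJ j hj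

lemma volume_setOf_forall_mem {ι : Type*} [Fintype ι] (f : ι → Set ℝ)
    (hf : ∀ i, MeasurableSet (f i)) :
    volume {x : EuclideanSpace ℝ ι | ∀ i, x i ∈ f i} = ∏ i, volume (f i) := by
  have he : {x : EuclideanSpace ℝ ι | ∀ i, x i ∈ f i}
      = (MeasurableEquiv.toLp 2 (ι → ℝ)).symm ⁻¹' Set.pi univ f := by
    ext x; simp [Set.mem_pi]
  rw [he, (EuclideanSpace.volume_preserving_symm_measurableEquiv_toLp ι).measure_preimage
    (MeasurableSet.univ_pi hf).nullMeasurableSet, volume_pi_pi]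

lemma volume_slab (i : Fin N) {I J : Set ℝ} (hI : MeasurableSet I) (hJ : MeasurableSet J) :
    volume (slab i I J) = volume I * volume J ^ (N - 1) := by
  have hmeas : ∀ j, MeasurableSet (Function.update (fun _ => J) i I j) := by
    intro j
    rcases eq_or_ne j i with rfl | hj
    · simpa using hI
    · simpa [hj] using hJ
  rw [slab, volume_setOf_forall_mem _ hmeas]
  simp only [Function.apply_update (fun _ => (volume : Measure ℝ))]
  rw [Finset.prod_update_of_mem (Finset.mem_univ i),
    Finset.prod_const, Finset.card_univ_sdiff, Finset.card_singleton, Fintype.card_fin]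

lemma box_sdiff_subset_iUnion_slab {s t : EuclideanSpace ℝ (Fin N)} {K : ℝ}
    (hs : ∀ j, s j ≤ K) : box s \ box t ⊆ ⋃ i, slab i (uIcc (s i) (t i)) (Icc 0 K) := by
  rintro x ⟨hxs, hxt⟩
  obtain ⟨i, hi⟩ : ∃ i, t i < x i := by
    by_contra! h
    exact hxt fun j => ⟨(hxs j).1, h j⟩
  exact mem_iUnion.2 ⟨i, mem_slab.2 ⟨mem_uIcc_of_ge hi.le (hxs i).2,
    fun j _ => ⟨(hxs j).1, (hxs j).2.trans (hs j)⟩⟩⟩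

lemma slab_Ioc_subset_box_sdiff {s t : EuclideanSpace ℝ (Fin N)} {m : ℝ} {i : Fin N}
    (ht : ∀ j, m ≤ t j) (hs : 0 ≤ s i) :
    slab i (Ioc (s i) (t i)) (Icc 0 m) ⊆ box t \ box s := by
  intro x hx
  obtain ⟨hxi, hxj⟩ := mem_slab.1 hx
  refine ⟨fun j => ?_, fun hxs => (hxs i).2.not_gt hxi.1⟩
  rcases eq_or_ne j i with rfl | hj
  · exact ⟨hs.trans hxi.1.le, hxi.2⟩
  · exact ⟨(hxj j hj).1, (hxj j hj).2.trans (ht j)⟩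

lemma volume_box_symmDiff_le {s t : EuclideanSpace ℝ (Fin N)} {K : ℝ} (hK : 0 ≤ K)
    (hs : ∀ j, s j ≤ K) (ht : ∀ j, t j ≤ K) :
    volume (box s ∆ box t) ≤ ENNReal.ofReal (N * K ^ (N - 1) * dist s t) := by
  have hsub : box s ∆ box t ⊆ ⋃ i, slab i (uIcc (s i) (t i)) (Icc 0 K) := by
    rw [Set.symmDiff_def]
    refine union_subset (box_sdiff_subset_iUnion_slab hs) ?_
    simpa only [uIcc_comm] using box_sdiff_subset_iUnion_slab (t := s) ht
  calc volume (box s ∆ box t)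
      ≤ ∑ i, volume (slab i (uIcc (s i) (t i)) (Icc 0 K)) :=
        (measure_mono hsub).trans (measure_iUnion_fintype_le _ _)
    _ ≤ ∑ _i : Fin N, ENNReal.ofReal (dist s t * K ^ (N - 1)) := by
        gcongr with i
        rw [volume_slab i measurableSet_uIcc measurableSet_Icc, Real.volume_interval,
          Real.volume_Icc, sub_zero, ← ENNReal.ofReal_pow hK, ← ENNReal.ofReal_mul (abs_nonneg _)]
        gcongr
        rw [abs_sub_comm, ← Real.dist_eq]
        exact PiLp.dist_apply_le s t i
    _ = ENNReal.ofReal (N * K ^ (N - 1) * dist s t) := by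
        rw [Finset.sum_const, Finset.card_univ, Fintype.card_fin, nsmul_eq_mul,
          ← ENNReal.ofReal_natCast, ← ENNReal.ofReal_mul (Nat.cast_nonneg N), mul_comm (dist s t),
          mul_assoc]

lemma ofReal_le_volume_box_symmDiff {s t : EuclideanSpace ℝ (Fin N)} {m : ℝ} (hm : 0 ≤ m)
    (hs : ∀ j, m ≤ s j) (ht : ∀ j, m ≤ t j) (i : Fin N) :
    ENNReal.ofReal (|s i - t i| * m ^ (N - 1)) ≤ volume (box s ∆ box t) := by
  have hsub : slab i (uIoc (s i) (t i)) (Icc 0 m) ⊆ box s ∆ box t := by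
    rw [Set.symmDiff_def]
    rcases le_total (s i) (t i) with h | h
    · rw [uIoc_of_le h]
      exact (slab_Ioc_subset_box_sdiff ht (hm.trans (hs i))).trans subset_union_right
    · rw [uIoc_of_ge h]
      exact (slab_Ioc_subset_box_sdiff hs (hm.trans (ht i))).trans subset_union_left
  calc ENNReal.ofReal (|s i - t i| * m ^ (N - 1))
      = volume (slab i (uIoc (s i) (t i)) (Icc 0 m)) := by
        rw [volume_slab i measurableSet_uIoc measurableSet_Icc, Real.volume_uIoc, Real.volume_Icc,
          sub_zero, ENNReal.ofReal_mul (abs_nonneg _), ENNReal.ofReal_pow hm, abs_sub_comm]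
    _ ≤ volume (box s ∆ box t) := measure_mono hsub

lemma volume_box_symmDiff_toReal_bounds {s t : EuclideanSpace ℝ (Fin N)} {m K : ℝ} (hm : 0 ≤ m)
    (hK : 0 ≤ K) (hs : ∀ j, m ≤ s j ∧ s j ≤ K) (ht : ∀ j, m ≤ t j ∧ t j ≤ K) :
    m ^ (N - 1) * dist s t ≤ √N * (volume (box s ∆ box t)).toReal ∧
      (volume (box s ∆ box t)).toReal ≤ N * K ^ (N - 1) * dist s t := by
  have hup := volume_box_symmDiff_le hK (fun j => (hs j).2) (fun j => (ht j).2)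
  refine ⟨?_, ENNReal.toReal_le_of_le_ofReal (by positivity) hup⟩
  set v := (volume (box s ∆ box t)).toReal
  have hcoord : ∀ i, |s i - t i| * m ^ (N - 1) ≤ v := fun i =>
    (ENNReal.ofReal_le_iff_le_toReal (ne_top_of_le_ne_top ENNReal.ofReal_ne_top hup)).1
      (ofReal_le_volume_box_symmDiff hm (fun j => (hs j).1) (fun j => (ht j).1) i)
  -- summing the squares of the coordinatewise bounds recovers the Euclidean distance
  refine le_of_pow_le_pow_left₀ two_ne_zero (by positivity) ?_
  calc (m ^ (N - 1) * dist s t) ^ 2 = ∑ i, (|s i - t i| * m ^ (N - 1)) ^ 2 := by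
        rw [EuclideanSpace.dist_eq, mul_pow, Real.sq_sqrt (by positivity), Finset.mul_sum]
        simp only [Real.dist_eq, mul_pow, sq_abs, mul_comm]
    _ ≤ ∑ _i : Fin N, v ^ 2 := by
        gcongr with i
        exact hcoord i
    _ = (√N * v) ^ 2 := by
        rw [Finset.sum_const, Finset.card_univ, Fintype.card_fin, nsmul_eq_mul, mul_pow,
          Real.sq_sqrt (Nat.cast_nonneg N)]

lemma exists_bounds_volume_box_symmDiff (hN : 0 < N) {t0 : EuclideanSpace ℝ (Fin N)}
    (ht0 : ∀ i, 0 < t0 i) :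
    ∃ c > 0, ∃ C ≥ 0, ∃ ρ > 0, ∀ s ∈ ball t0 ρ, ∀ t ∈ ball t0 ρ,
      c * dist s t ≤ (volume (box s ∆ box t)).toReal ∧
        (volume (box s ∆ box t)).toReal ≤ C * dist s t := by
  have : Nonempty (Fin N) := ⟨⟨0, hN⟩⟩
  obtain ⟨i0, hi0⟩ := Finite.exists_min t0
  obtain ⟨m, hm, hm2⟩ : ∃ m > 0, ∀ j, 2 * m ≤ t0 j :=
    ⟨t0 i0 / 2, half_pos (ht0 i0), fun j => by linarith [hi0 j]⟩
  set K := ‖t0‖ + m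
  have hcoord : ∀ u ∈ ball t0 m, ∀ j, m ≤ u j ∧ u j ≤ K := by
    intro u hu j
    have hj : |u j - t0 j| < m := (PiLp.dist_apply_le u t0 j).trans_lt (mem_ball.1 hu)
    have hj0 : t0 j ≤ ‖t0‖ := (le_abs_self _).trans (PiLp.norm_apply_le t0 j)
    constructor <;> linarith [abs_lt.1 hj, hm2 j]
  refine ⟨m ^ (N - 1) / √N, by positivity, N * K ^ (N - 1), by positivity, m, hm,
    fun s hs t ht => ?_⟩
  obtain ⟨hlow, hup⟩ := volume_box_symmDiff_toReal_bounds hm.le (by positivity)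
    (hcoord s hs) (hcoord t ht)
  refine ⟨?_, hup⟩
  rw [div_mul_eq_mul_div, div_le_iff₀' (by positivity)]
  exact hlow

lemma mem_closure_orth_diff_singleton (hN : 0 < N) {t : EuclideanSpace ℝ (Fin N)}
    (ht : t ∈ orth N) : t ∈ closure (orth N \ {t}) := by
  refine Metric.mem_closure_iff.2 fun ε hε => ?_
  set p := t + EuclideanSpace.single ⟨0, hN⟩ (ε / 2)
  have hp : dist t p = ε / 2 := by
    rw [dist_self_add_right, PiLp.norm_single, Real.norm_of_nonneg (by positivity)]
  refine ⟨p, ⟨fun i => ?_, fun hpt => ?_⟩, by linarith⟩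
  · have := ht i
    simp only [p, PiLp.add_apply, PiLp.single_apply]
    split_ifs <;> positivity
  · rw [mem_singleton_iff.1 hpt, dist_self] at hp
    linarith

end Boxes

lemma incVar_eq_integral_mul {T : Type*} {P : Measure Ω} {X : Ω → T → ℝ} {s t : T}
    (hs : MemLp (fun ω => X ω s) 2 P) (ht : MemLp (fun ω => X ω t) 2 P) :
    incVar P X s t = ∫ ω, X ω t * X ω t ∂P - 2 * ∫ ω, X ω s * X ω t ∂P
      + ∫ ω, X ω s * X ω s ∂P := by
  have hss : Integrable (fun ω => X ω s * X ω s) P := hs.integrable_mul hs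
  have hst : Integrable (fun ω => X ω s * X ω t) P := hs.integrable_mul ht
  have htt : Integrable (fun ω => X ω t * X ω t) P := ht.integrable_mul ht
  have hexp : (fun ω => (X ω t - X ω s) ^ 2)
      = fun ω => X ω t * X ω t - 2 * (X ω s * X ω t) + X ω s * X ω s := by
    funext ω; ring
  rw [incVar, hexp, integral_add _ hss, integral_sub htt (hst.const_mul 2), integral_const_mul]
  exact htt.sub (hst.const_mul 2)

lemma IsMpfBm.incVar_eq {P : Measure Ω} {N : ℕ} {H : ℝ} {B : Ω → EuclideanSpace ℝ (Fin N) → ℝ}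
    (hB : IsMpfBm P H B) (hH : H ≠ 0) {s t : EuclideanSpace ℝ (Fin N)} (hs : s ∈ orth N)
    (ht : t ∈ orth N) : incVar P B s t = (volume (box s ∆ box t)).toReal ^ (2 * H) := by
  obtain ⟨-, -, hL2, hcov⟩ := hB
  rw [incVar_eq_integral_mul (hL2 s hs) (hL2 t ht), hcov t ht t ht, hcov s hs t ht,
    hcov s hs s hs]
  simp only [symmDiff_self, bot_eq_empty, measure_empty, ENNReal.toReal_zero,
    Real.zero_rpow (mul_ne_zero two_ne_zero hH)]
  ring

theorem statement11_general {Ω : Type*} [MeasurableSpace Ω] (P : Measure Ω)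
    {N : ℕ} (hN : 0 < N) (H : ℝ) (hH0 : 0 < H)
    (B : Ω → EuclideanSpace ℝ (Fin N) → ℝ) (hB : IsMpfBm P H B) :
    ∀ t0 : EuclideanSpace ℝ (Fin N), (∀ i, 0 < t0 i) →
      detHolder (incVar P B) (orth N) t0 = H ∧ detSub (incVar P B) (orth N) t0 = H := by
  intro t0 ht0
  have ht0' : t0 ∈ orth N := fun i => (ht0 i).le
  obtain ⟨c, hc, C, hC, ρ, hρ, hvol⟩ := exists_bounds_volume_box_symmDiff hN ht0
  have hV : ∀ s ∈ ballIn (orth N) t0 ρ, ∀ t ∈ ballIn (orth N) t0 ρ,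
      c ^ (2 * H) * dist s t ^ (2 * H) ≤ incVar P B s t ∧
        incVar P B s t ≤ C ^ (2 * H) * dist s t ^ (2 * H) := by
    rintro s ⟨hs, hsρ⟩ t ⟨ht, htρ⟩
    obtain ⟨hlow, hup⟩ := hvol s hsρ t htρ
    rw [hB.incVar_eq hH0.ne' hs ht, ← Real.mul_rpow hc.le dist_nonneg,
      ← Real.mul_rpow hC dist_nonneg]
    exact ⟨Real.rpow_le_rpow (by positivity) hlow (by positivity),
      Real.rpow_le_rpow ENNReal.toReal_nonneg hup (by positivity)⟩
  have hacc := mem_closure_orth_diff_singleton hN ht0'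
  have hc' := Real.rpow_pos_of_pos hc (2 * H)
  exact ⟨detHolder_eq_of_bounds hH0 ht0' hacc hc' hρ (fun s hs t ht => (hV s hs t ht).1)
      (fun s hs t ht => (hV s hs t ht).2),
    detSub_eq_of_bounds hH0 ht0' hacc hc' hρ (fun s hs t ht => (hV s hs t ht).1)
      (fun s hs t ht => (hV s hs t ht).2)⟩

/-- Lemma 3.2: the deterministic local Hölder exponent and sub-exponent of the multiparameter
fractional Brownian motion of index `H ∈ (0, 1/2]` both equal `H`. -/
theorem statement11 {Ω : Type*} [MeasurableSpace Ω] (P : Measure Ω) [IsProbabilityMeasure P]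
    {N : ℕ} (hN : 0 < N) (H : ℝ) (hH0 : 0 < H) (hH : H ≤ 1/2)
    (B : Ω → EuclideanSpace ℝ (Fin N) → ℝ) (hB : IsMpfBm P H B) :
    ∀ t0 : EuclideanSpace ℝ (Fin N), (∀ i, 0 < t0 i) →
      detHolder (incVar P B) (orth N) t0 = H ∧ detSub (incVar P B) (orth N) t0 = H :=
  statement11_general P hN H hH0 B hB
end
end
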